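/- Let f₁ : ℝⁿ → ℝⁿ and f₂ : ℝⁿ → ℝⁿˣᵐ be continuous, let (uₙ) converge weakly in L²([0,T];ℝᵐ) to ū, let xₙ₀ → x̄₀ in ℝⁿ, and suppose the trajectories xₙ of ẋₙ = f₁(xₙ) + f₂(xₙ)·uₙ, xₙ(0) = xₙ₀, converge uniformly on [0,T] to a function x̂. Then x̂ is the trajectory of ẋ = f₁(x) + f₂(x)·ū with x(0) = x̄₀. -/

import Mathlib

/-!
On an interval `[0, t]` on which `x̂` is bounded, the `xₙ` eventually stay in a fixed compact
set, so `f₁ ∘ xₙ → f₁ ∘ x̂` and `f₂ ∘ xₙ → f₂ ∘ x̂` uniformly there. Hence the drift integrals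
converge, `∫ (f₂ ∘ xₙ - f₂ ∘ x̂) uₙ → 0` because a weakly convergent sequence is bounded in `L²`
(Banach–Steinhaus), and `∫ (f₂ ∘ x̂) uₙ → ∫ (f₂ ∘ x̂) ū` is weak convergence tested against the
rows of `f₂ ∘ x̂`; this uses that the dynamics is affine in the control. Passing to the limit in
the integral equation gives the equation for `x̂` on `[0, t]`.

If `x̂` is unbounded on `[0, t]`, so are the `xₙ` for large `n`; their integrands are then not
integrable on `[0, t]`, so `xₙ(t) = xₙ₀ → x̄₀` and `x̂(t) = x̄₀`. The limit integrand is not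
integrable on `[0, t]` either: each `x̂(s)` equals `x̄₀` or `x̄₀ + ∫₀ˢ (f₁(x̂) + f₂(x̂) ū)` by the
two cases, so integrability would make `x̂` bounded on `[0, t]`.
-/

open MeasureTheory Set Filter Topology Bornology

section Primitive

variable {E : Type*} [NormedAddCommGroup E] [NormedSpace ℝ E]

theorem aestronglyMeasurable_primitive (g : ℝ → E) (a : ℝ) (μ : Measure ℝ) :
    AEStronglyMeasurable (fun s => ∫ r in a..s, g r) (μ.restrict (Ici a)) := by
  set S := {s | a ≤ s ∧ IntervalIntegrable g volume a s}
  have hS : S.OrdConnected := ⟨fun b hb c hc s hs => ⟨hb.1.trans hs.1, hc.2.mono_set <| by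
    rw [uIcc_of_le (hb.1.trans hs.1), uIcc_of_le hc.1]; exact Icc_subset_Icc_right hs.2⟩⟩
  have hIcc : ∀ b ∈ S, ContinuousOn (fun s => ∫ r in a..s, g r) (Icc a b) := fun b hb => by
    simpa only [uIcc_of_le hb.1] using
      intervalIntegral.continuousOn_primitive_interval' hb.2 left_mem_uIcc
  have hcont : ContinuousOn (fun s => ∫ r in a..s, g r) S := by
    intro s₀ hs₀
    by_cases h : ∃ b ∈ S, s₀ < b
    · obtain ⟨b, hb, hlt⟩ := h
      have := (hIcc b hb s₀ ⟨hs₀.1, hlt.le⟩).mono fun c (hc : c ∈ S ∩ Iio b) => ⟨hc.1.1, hc.2.le⟩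
      rwa [continuousWithinAt_inter (Iio_mem_nhds hlt)] at this
    · push Not at h
      exact (hIcc s₀ hs₀ s₀ ⟨hs₀.1, le_rfl⟩).mono fun c hc => ⟨hc.1, h c hc⟩
  have hind : AEStronglyMeasurable (S.indicator fun s => ∫ r in a..s, g r) (μ.restrict (Ici a)) :=
    (aestronglyMeasurable_indicator_iff hS.measurableSet).2
      (hcont.aestronglyMeasurable hS.measurableSet)
  refine hind.congr ((ae_restrict_iff' measurableSet_Ici).2 (ae_of_all _ fun s hs => ?_))
  by_cases hsS : s ∈ S
  · exact indicator_of_mem hsS _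
  · rw [indicator_of_notMem hsS]
    exact (intervalIntegral.integral_undef fun h => hsS ⟨hs, h⟩).symm

end Primitive

section WeakL2

variable {α F : Type*} [MeasurableSpace α] {μ : Measure α}
  [NormedAddCommGroup F] [InnerProductSpace ℝ F] {u : ℕ → α → F} {ubar : α → F}

def L2WeakTendsto (u : ℕ → α → F) (ubar : α → F) (μ : Measure α) : Prop :=
  ∀ v : α → F, MemLp v 2 μ →
    Tendsto (fun k => ∫ a, inner ℝ (u k a) (v a) ∂μ) atTop (𝓝 (∫ a, inner ℝ (ubar a) (v a) ∂μ))

theorem L2WeakTendsto.restrict (h : L2WeakTendsto u ubar μ) {s : Set α} (hs : MeasurableSet s) :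
    L2WeakTendsto u ubar (μ.restrict s) := by
  intro v hv
  have key : ∀ w : α → F,
      ∫ a, inner ℝ (w a) (s.indicator v a) ∂μ = ∫ a in s, inner ℝ (w a) (v a) ∂μ := fun w => by
    rw [← integral_indicator hs]
    congr 1 with a
    by_cases ha : a ∈ s <;> simp [ha]
  simpa only [key] using h _ ((memLp_indicator_iff_restrict hs).2 hv)

theorem L2WeakTendsto.exists_norm_toLp_le [CompleteSpace F] (h : L2WeakTendsto u ubar μ)
    (hu : ∀ k, MemLp (u k) 2 μ) : ∃ C, ∀ k, ‖(hu k).toLp (u k)‖ ≤ C := by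
  have hpt : ∀ V : Lp F 2 μ, ∃ C, ∀ k, ‖innerSL ℝ ((hu k).toLp (u k)) V‖ ≤ C := by
    intro V
    have hV : Tendsto (fun k => innerSL ℝ ((hu k).toLp (u k)) V) atTop
        (𝓝 (∫ a, inner ℝ (ubar a) (V a) ∂μ)) := by
      refine (h V (Lp.memLp V)).congr fun k => ?_
      rw [innerSL_apply_apply, L2.inner_def]
      exact integral_congr_ae (by filter_upwards [(hu k).coeFn_toLp] with a ha; rw [ha])
    obtain ⟨C, hC⟩ := hV.norm.bddAbove_range
    exact ⟨C, fun k => hC ⟨k, rfl⟩⟩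
  obtain ⟨C, hC⟩ := banach_steinhaus hpt
  exact ⟨C, fun k => by simpa only [innerSL_apply_norm] using hC k⟩

theorem L2WeakTendsto.exists_integral_norm_le [CompleteSpace F] [IsFiniteMeasure μ]
    (h : L2WeakTendsto u ubar μ) (hu : ∀ k, MemLp (u k) 2 μ) :
    ∃ C, ∀ k, ∫ a, ‖u k a‖ ∂μ ≤ C := by
  obtain ⟨C, hC⟩ := h.exists_norm_toLp_le hu
  refine ⟨(μ.real univ + C ^ 2) / 2, fun k => ?_⟩
  have hsq_int : Integrable (fun a => ‖u k a‖ ^ 2) μ := (memLp_two_iff_integrable_sq_norm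
    (hu k).aestronglyMeasurable).1 (hu k)
  have hsq : ∫ a, ‖u k a‖ ^ 2 ∂μ = ‖(hu k).toLp (u k)‖ ^ 2 := by
    rw [← real_inner_self_eq_norm_sq, L2.inner_def]
    refine integral_congr_ae ?_
    filter_upwards [(hu k).coeFn_toLp] with a ha
    rw [ha, real_inner_self_eq_norm_sq]
  calc ∫ a, ‖u k a‖ ∂μ ≤ ∫ a, (1 + ‖u k a‖ ^ 2) / 2 ∂μ :=
        integral_mono ((hu k).integrable one_le_two).norm
          (((integrable_const 1).add hsq_int).div_const 2)
          fun a => by nlinarith [sq_nonneg (‖u k a‖ - 1)]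
    _ = (μ.real univ + ‖(hu k).toLp (u k)‖ ^ 2) / 2 := by
        rw [integral_div, integral_add (integrable_const 1) hsq_int, hsq]
        simp
    _ ≤ (μ.real univ + C ^ 2) / 2 := by gcongr; exact hC k

end WeakL2

theorem Bornology.IsBounded.image_of_continuous {X Y : Type*} [PseudoMetricSpace X] [ProperSpace X]
    [PseudoMetricSpace Y] {s : Set X} (hs : IsBounded s) {φ : X → Y} (hφ : Continuous φ) :
    IsBounded (φ '' s) :=
  (hs.isCompact_closure.image hφ).isBounded.subset (image_mono subset_closure)

theorem TendstoUniformlyOn.continuous_comp_of_isBounded {ι α X Y : Type*} [PseudoMetricSpace X]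
    [ProperSpace X] [UniformSpace Y] {p : Filter ι} {F : ι → α → X} {f : α → X} {s : Set α}
    (h : TendstoUniformlyOn F f p s) (hb : IsBounded (f '' s)) {φ : X → Y} (hφ : Continuous φ) :
    TendstoUniformlyOn (fun i a => φ (F i a)) (fun a => φ (f a)) p s := by
  have hK : IsCompact (Metric.cthickening 1 (f '' s)) :=
    Metric.isCompact_of_isClosed_isBounded Metric.isClosed_cthickening hb.cthickening
  refine (hK.uniformContinuousOn_of_continuous hφ.continuousOn).comp_tendstoUniformlyOn_eventually
    ?_ (fun a ha => Metric.self_subset_cthickening _ (mem_image_of_mem f ha)) h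
  filter_upwards [Metric.tendstoUniformlyOn_iff.1 h 1 one_pos] with i hi a ha
  exact Metric.mem_cthickening_of_dist_le _ _ _ _ (mem_image_of_mem f ha)
    ((dist_comm _ _).trans_le (hi a ha).le)

section Integrals

variable {α E F : Type*} [MeasurableSpace α] {μ : Measure α}

theorem TendstoUniformlyOn.eventually_ae_norm_sub_le {ι G : Type*} [SeminormedAddCommGroup G]
    {l : Filter ι} {g : ι → α → G} {gbar : α → G} {s : Set α} (h : TendstoUniformlyOn g gbar l s)
    (hs : ∀ᵐ a ∂μ, a ∈ s) {ε : ℝ} (hε : 0 < ε) : ∀ᶠ i in l, ∀ᵐ a ∂μ, ‖g i a - gbar a‖ ≤ ε := by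
  filter_upwards [Metric.tendstoUniformlyOn_iff.1 h ε hε] with i hi
  filter_upwards [hs] with a ha
  rw [← dist_eq_norm, dist_comm]
  exact (hi a ha).le

theorem TendstoUniformlyOn.exists_eventually_ae_norm_le {ι G : Type*} [SeminormedAddCommGroup G]
    {l : Filter ι} {g : ι → α → G} {gbar : α → G} {s : Set α} (h : TendstoUniformlyOn g gbar l s)
    (hs : ∀ᵐ a ∂μ, a ∈ s) (hb : IsBounded (gbar '' s)) :
    ∃ C, (∀ᵐ a ∂μ, ‖gbar a‖ ≤ C) ∧ ∀ᶠ i in l, ∀ᵐ a ∂μ, ‖g i a‖ ≤ C := by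
  obtain ⟨C, hC⟩ := isBounded_iff_forall_norm_le.1 hb
  have hgbar : ∀ᵐ a ∂μ, ‖gbar a‖ ≤ C := hs.mono fun a ha => hC _ (mem_image_of_mem _ ha)
  refine ⟨C + 1, hgbar.mono fun a ha => by linarith, ?_⟩
  filter_upwards [h.eventually_ae_norm_sub_le hs one_pos] with i hi
  filter_upwards [hi, hgbar] with a h₁ h₂
  linarith [norm_le_norm_add_norm_sub' (g i a) (gbar a)]

theorem tendsto_integral_zero_of_norm_le_mul {ι G : Type*} [NormedAddCommGroup G]
    [NormedSpace ℝ G] {l : Filter ι} {f : ι → α → G} {w : ι → α → ℝ} {C : ℝ}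
    (hw : ∀ i, Integrable (w i) μ) (hC : ∀ i, ∫ a, w i a ∂μ ≤ C)
    (hf : ∀ ε > 0, ∀ᶠ i in l, ∀ᵐ a ∂μ, ‖f i a‖ ≤ ε * w i a) :
    Tendsto (fun i => ∫ a, f i a ∂μ) l (𝓝 0) := by
  refine Metric.tendsto_nhds.2 fun ε hε => ?_
  have hη : 0 < ε / (|C| + 1) := by positivity
  filter_upwards [hf _ hη] with i hi
  rw [dist_zero_right]
  calc ‖∫ a, f i a ∂μ‖ ≤ ∫ a, ε / (|C| + 1) * w i a ∂μ :=
        norm_integral_le_of_norm_le ((hw i).const_mul _) hi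
    _ = ε / (|C| + 1) * ∫ a, w i a ∂μ := integral_const_mul _ _
    _ ≤ ε / (|C| + 1) * |C| := by gcongr; exact (hC i).trans (le_abs_self C)
    _ < ε := by
        rw [div_mul_eq_mul_div, div_lt_iff₀ (by positivity)]
        nlinarith [abs_nonneg C]

variable [NormedAddCommGroup E] [NormedAddCommGroup F]

theorem integrable_clm_apply_of_norm_le [NormedSpace ℝ E] [NormedSpace ℝ F]
    {A : α → F →L[ℝ] E} {w : α → F} {C : ℝ} (hA : AEStronglyMeasurable A μ)
    (hAC : ∀ᵐ a ∂μ, ‖A a‖ ≤ C) (hw : Integrable w μ) : Integrable (fun a => A a (w a)) μ := by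
  refine (hw.norm.const_mul C).mono'
    (isBoundedBilinearMap_apply.continuous.comp_aestronglyMeasurable
      (hA.prodMk hw.aestronglyMeasurable)) ?_
  filter_upwards [hAC] with a ha
  exact (A a).le_of_opNorm_le ha (w a)

variable [InnerProductSpace ℝ E] [FiniteDimensional ℝ E] [InnerProductSpace ℝ F] [CompleteSpace F]
  [IsFiniteMeasure μ] {u : ℕ → α → F} {ubar : α → F}

open ContinuousLinearMap in
theorem L2WeakTendsto.tendsto_integral_clm_apply (h : L2WeakTendsto u ubar μ)
    (hu : ∀ k, MemLp (u k) 2 μ) (hubar : MemLp ubar 2 μ) {A : α → F →L[ℝ] E} {C : ℝ}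
    (hA : AEStronglyMeasurable A μ) (hAC : ∀ᵐ a ∂μ, ‖A a‖ ≤ C) :
    Tendsto (fun k => ∫ a, A a (u k a) ∂μ) atTop (𝓝 (∫ a, A a (ubar a) ∂μ)) := by
  set b := stdOrthonormalBasis ℝ E
  have hpair : ∀ i (w : α → F), MemLp w 2 μ →
      inner ℝ (b i) (∫ a, A a (w a) ∂μ) = ∫ a, inner ℝ (w a) (adjoint (A a) (b i)) ∂μ := by
    intro i w hw
    rw [← integral_inner (integrable_clm_apply_of_norm_le hA hAC (hw.integrable one_le_two))]
    congr 1 with a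
    rw [adjoint_inner_right, real_inner_comm]
  have hrow : ∀ i, MemLp (fun a => adjoint (A a) (b i)) 2 μ := fun i =>
    MemLp.of_bound
      ((adjoint.continuous.comp_aestronglyMeasurable hA).apply_continuousLinearMap (b i)) C <| by
      filter_upwards [hAC] with a ha
      calc ‖adjoint (A a) (b i)‖ ≤ C * ‖b i‖ :=
            (adjoint (A a)).le_of_opNorm_le (by rwa [LinearIsometryEquiv.norm_map]) _
        _ = C := by rw [b.orthonormal.1 i, mul_one]
  have hcoord : ∀ i, Tendsto (fun k => inner ℝ (b i) (∫ a, A a (u k a) ∂μ)) atTop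
      (𝓝 (inner ℝ (b i) (∫ a, A a (ubar a) ∂μ))) := fun i => by
    simpa only [hpair i _ (hu _), hpair i _ hubar] using h _ (hrow i)
  simpa only [b.sum_repr'] using
    tendsto_finsetSum Finset.univ fun i _ => (hcoord i).smul_const (b i)

theorem tendsto_integral_add_clm_apply {s : Set α} (hs : ∀ᵐ a ∂μ, a ∈ s)
    {g : ℕ → α → E} {gbar : α → E} {B : ℕ → α → F →L[ℝ] E} {Bbar : α → F →L[ℝ] E}
    (hg : TendstoUniformlyOn g gbar atTop s) (hB : TendstoUniformlyOn B Bbar atTop s)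
    (hg_meas : ∀ k, AEStronglyMeasurable (g k) μ) (hB_meas : ∀ k, AEStronglyMeasurable (B k) μ)
    (hgbar : IsBounded (gbar '' s)) (hBbar : IsBounded (Bbar '' s))
    (hweak : L2WeakTendsto u ubar μ) (hu : ∀ k, MemLp (u k) 2 μ) (hubar : MemLp ubar 2 μ) :
    Tendsto (fun k => ∫ a, g k a + B k a (u k a) ∂μ) atTop
      (𝓝 (∫ a, gbar a + Bbar a (ubar a) ∂μ)) := by
  obtain ⟨Cg, hgbar_le, hg_le⟩ := hg.exists_eventually_ae_norm_le hs hgbar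
  obtain ⟨CB, hBbar_le, hB_le⟩ := hB.exists_eventually_ae_norm_le hs hBbar
  have hgbar_int : Integrable gbar μ := .of_bound (aestronglyMeasurable_of_tendsto_ae atTop
    hg_meas (hs.mono fun a ha => hg.tendsto_at ha)) Cg hgbar_le
  have hBbar_meas : AEStronglyMeasurable Bbar μ :=
    aestronglyMeasurable_of_tendsto_ae atTop hB_meas (hs.mono fun a ha => hB.tendsto_at ha)
  have hu₁ : ∀ k, Integrable (u k) μ := fun k => (hu k).integrable one_le_two
  have hBbar_int := fun k => integrable_clm_apply_of_norm_le hBbar_meas hBbar_le (hu₁ k)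
  have hdrift : Tendsto (fun k => ∫ a, g k a - gbar a ∂μ) atTop (𝓝 0) :=
    tendsto_integral_zero_of_norm_le_mul (w := fun _ _ => 1) (fun _ => integrable_const 1)
      (fun _ => le_rfl) fun ε hε => by
        simpa only [mul_one] using hg.eventually_ae_norm_sub_le hs hε
  obtain ⟨Cu, hCu⟩ := hweak.exists_integral_norm_le hu
  have hcoeff : Tendsto (fun k => ∫ a, (B k a - Bbar a) (u k a) ∂μ) atTop (𝓝 0) :=
    tendsto_integral_zero_of_norm_le_mul (fun k => (hu₁ k).norm) hCu fun ε hε => by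
      filter_upwards [hB.eventually_ae_norm_sub_le hs hε] with k hk
      filter_upwards [hk] with a ha
      exact (B k a - Bbar a).le_of_opNorm_le ha _
  have hcontrol := hweak.tendsto_integral_clm_apply hu hubar hBbar_meas hBbar_le
  have hsum := (hdrift.add_const (∫ a, gbar a ∂μ)).add (hcoeff.add hcontrol)
  rw [zero_add, zero_add, ← integral_add hgbar_int
    (integrable_clm_apply_of_norm_le hBbar_meas hBbar_le (hubar.integrable one_le_two))] at hsum
  refine hsum.congr' ?_
  filter_upwards [hg_le, hB_le] with k hgk hBk
  have hgk_int : Integrable (g k) μ := .of_bound (hg_meas k) Cg hgk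
  have hBk_int := integrable_clm_apply_of_norm_le (hB_meas k) hBk (hu₁ k)
  simp only [sub_apply]
  rw [integral_sub hgk_int hgbar_int, integral_sub hBk_int (hBbar_int k),
    integral_add hgk_int hBk_int]
  abel

end Integrals

section Trajectory

variable {E F : Type*} [NormedAddCommGroup E] [NormedSpace ℝ E] [NormedAddCommGroup F]
  [NormedSpace ℝ F]

/-- The integral is `0` when the integrand is not integrable on `[0, t]`, so a trajectory may
sit at `x₀` from some time on instead of blowing up. -/
def IsTrajectory (f₁ : E → E) (f₂ : E → F →L[ℝ] E) (u : ℝ → F) (T : ℝ) (x₀ : E) (x : ℝ → E) :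
    Prop :=
  ∀ t ∈ Icc 0 T, x t = x₀ + ∫ s in 0..t, (f₁ (x s) + f₂ (x s) (u s))

namespace IsTrajectory

variable {f₁ : E → E} {f₂ : E → F →L[ℝ] E} {u : ℝ → F} {T : ℝ} {x₀ : E} {x : ℝ → E}

theorem aestronglyMeasurable (h : IsTrajectory f₁ f₂ u T x₀ x) :
    AEStronglyMeasurable x (volume.restrict (Icc 0 T)) :=
  (aestronglyMeasurable_const.add ((aestronglyMeasurable_primitive _ 0 volume).mono_measure
    (Measure.restrict_mono Icc_subset_Ici_self le_rfl))).congr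
    ((ae_restrict_iff' measurableSet_Icc).2 (ae_of_all _ fun t ht => (h t ht).symm))

theorem continuousOn (h : IsTrajectory f₁ f₂ u T x₀ x) {t : ℝ} (ht : t ≤ T)
    (hint : IntervalIntegrable (fun s => f₁ (x s) + f₂ (x s) (u s)) volume 0 t) :
    ContinuousOn x (Icc 0 t) :=
  (continuousOn_const.add (intervalIntegral.continuousOn_primitive_interval' hint
    left_mem_uIcc)).mono Icc_subset_uIcc |>.congr fun s hs => h s ⟨hs.1, hs.2.trans ht⟩

end IsTrajectory

variable {f₁ : E → E} {f₂ : E → F →L[ℝ] E} {T : ℝ} {u : ℕ → ℝ → F} {ubar : ℝ → F}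
  {x₀ : ℕ → E} {xbar₀ : E} {x : ℕ → ℝ → E} {xhat : ℝ → E}

theorem limit_eq_initial_of_not_isBounded (htraj : ∀ k, IsTrajectory f₁ f₂ (u k) T (x₀ k) (x k))
    (hx₀ : Tendsto x₀ atTop (𝓝 xbar₀)) (hunif : TendstoUniformlyOn x xhat atTop (Icc 0 T))
    {t : ℝ} (ht : t ∈ Icc 0 T) (hb : ¬ IsBounded (xhat '' Icc 0 t)) : xhat t = xbar₀ := by
  have hconst : ∀ᶠ k in atTop, x k t = x₀ k := by
    filter_upwards [Metric.tendstoUniformlyOn_iff.1 hunif 1 one_pos] with k hk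
    rw [htraj k t ht, intervalIntegral.integral_undef, add_zero]
    intro hint
    refine hb <| (isCompact_Icc.image_of_continuousOn ((htraj k).continuousOn ht.2 hint)).isBounded
      |>.thickening (δ := 1) |>.subset ?_
    rintro _ ⟨s, hs, rfl⟩
    exact Metric.mem_thickening_iff.2
      ⟨x k s, mem_image_of_mem _ hs, hk s ⟨hs.1, hs.2.trans ht.2⟩⟩
  exact tendsto_nhds_unique ((hunif.tendsto_at ht).congr' hconst) hx₀

end Trajectory

section TrajectoryLimit

variable {E F : Type*} [NormedAddCommGroup E] [InnerProductSpace ℝ E] [FiniteDimensional ℝ E]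
  [NormedAddCommGroup F] [InnerProductSpace ℝ F] [CompleteSpace F]
  {f₁ : E → E} {f₂ : E → F →L[ℝ] E} {T : ℝ} {u : ℕ → ℝ → F} {ubar : ℝ → F}
  {x₀ : ℕ → E} {xbar₀ : E} {x : ℕ → ℝ → E} {xhat : ℝ → E}

theorem limit_eq_of_isBounded (hf₁ : Continuous f₁) (hf₂ : Continuous f₂)
    (hu : ∀ k, MemLp (u k) 2 (volume.restrict (Icc 0 T)))
    (hubar : MemLp ubar 2 (volume.restrict (Icc 0 T)))
    (hweak : L2WeakTendsto u ubar (volume.restrict (Icc 0 T)))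
    (htraj : ∀ k, IsTrajectory f₁ f₂ (u k) T (x₀ k) (x k))
    (hx₀ : Tendsto x₀ atTop (𝓝 xbar₀)) (hunif : TendstoUniformlyOn x xhat atTop (Icc 0 T))
    {t : ℝ} (ht : t ∈ Icc 0 T) (hb : IsBounded (xhat '' Icc 0 t)) :
    xhat t = xbar₀ + ∫ s in 0..t, (f₁ (xhat s) + f₂ (xhat s) (ubar s)) := by
  have hsub : Ioc 0 t ⊆ Icc 0 T := Ioc_subset_Icc_self.trans (Icc_subset_Icc_right ht.2)
  have hμ : (volume.restrict (Icc 0 T)).restrict (Ioc 0 t) = volume.restrict (Ioc 0 t) := by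
    rw [Measure.restrict_restrict measurableSet_Ioc, inter_eq_left.2 hsub]
  have hb' : IsBounded (xhat '' Ioc 0 t) := hb.subset (image_mono Ioc_subset_Icc_self)
  have hx_meas : ∀ k, AEStronglyMeasurable (x k) (volume.restrict (Ioc 0 t)) := fun k =>
    (htraj k).aestronglyMeasurable.mono_measure (Measure.restrict_mono hsub le_rfl)
  have hlim := tendsto_integral_add_clm_apply (ae_restrict_mem measurableSet_Ioc)
    ((hunif.mono hsub).continuous_comp_of_isBounded hb' hf₁)
    ((hunif.mono hsub).continuous_comp_of_isBounded hb' hf₂)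
    (fun k => hf₁.comp_aestronglyMeasurable (hx_meas k))
    (fun k => hf₂.comp_aestronglyMeasurable (hx_meas k))
    (image_image f₁ xhat _ ▸ hb'.image_of_continuous hf₁)
    (image_image f₂ xhat _ ▸ hb'.image_of_continuous hf₂)
    (hμ ▸ hweak.restrict measurableSet_Ioc) (fun k => hμ ▸ (hu k).restrict _)
    (hμ ▸ hubar.restrict _)
  have hdiff : xhat t - xbar₀ = ∫ s in Ioc 0 t, (f₁ (xhat s) + f₂ (xhat s) (ubar s)) := by
    refine tendsto_nhds_unique ((hunif.tendsto_at ht).sub hx₀) (hlim.congr fun k => ?_)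
    rw [htraj k t ht, intervalIntegral.integral_of_le ht.1]
    abel
  rw [intervalIntegral.integral_of_le ht.1, ← hdiff]
  abel

theorem not_intervalIntegrable_limit_of_not_isBounded (hf₁ : Continuous f₁)
    (hf₂ : Continuous f₂) (hu : ∀ k, MemLp (u k) 2 (volume.restrict (Icc 0 T)))
    (hubar : MemLp ubar 2 (volume.restrict (Icc 0 T)))
    (hweak : L2WeakTendsto u ubar (volume.restrict (Icc 0 T)))
    (htraj : ∀ k, IsTrajectory f₁ f₂ (u k) T (x₀ k) (x k))
    (hx₀ : Tendsto x₀ atTop (𝓝 xbar₀)) (hunif : TendstoUniformlyOn x xhat atTop (Icc 0 T))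
    {t : ℝ} (ht : t ∈ Icc 0 T) (hb : ¬ IsBounded (xhat '' Icc 0 t)) :
    ¬ IntervalIntegrable (fun s => f₁ (xhat s) + f₂ (xhat s) (ubar s)) volume 0 t := by
  intro hint
  have hy := continuousOn_const.add (intervalIntegral.continuousOn_primitive_interval' hint
    left_mem_uIcc) (f := fun _ => xbar₀)
  have hcover : xhat '' Icc 0 t ⊆
      (fun s => xbar₀ + ∫ r in 0..s, (f₁ (xhat r) + f₂ (xhat r) (ubar r))) '' uIcc 0 t ∪
        {xbar₀} := by
    rintro _ ⟨s, hs, rfl⟩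
    have hsT : s ∈ Icc 0 T := ⟨hs.1, hs.2.trans ht.2⟩
    by_cases hbs : IsBounded (xhat '' Icc 0 s)
    · exact .inl ⟨s, Icc_subset_uIcc hs,
        (limit_eq_of_isBounded hf₁ hf₂ hu hubar hweak htraj hx₀ hunif hsT hbs).symm⟩
    · exact .inr (limit_eq_initial_of_not_isBounded htraj hx₀ hunif hsT hbs)
  exact hb (((isCompact_uIcc.image_of_continuousOn hy).isBounded.union
    isBounded_singleton).subset hcover)

end TrajectoryLimit

theorem stmt_10_general (n m : ℕ) (T : ℝ)
    (f₁ : EuclideanSpace ℝ (Fin n) → EuclideanSpace ℝ (Fin n))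
    (f₂ : EuclideanSpace ℝ (Fin n) → (EuclideanSpace ℝ (Fin m) →L[ℝ] EuclideanSpace ℝ (Fin n)))
    (hf₁ : Continuous f₁) (hf₂ : Continuous f₂)
    (u : ℕ → ℝ → EuclideanSpace ℝ (Fin m)) (ubar : ℝ → EuclideanSpace ℝ (Fin m))
    (hu : ∀ k, MemLp (u k) 2 (volume.restrict (Icc (0:ℝ) T)))
    (hubar : MemLp ubar 2 (volume.restrict (Icc (0:ℝ) T)))
    (hweak : ∀ v : ℝ → EuclideanSpace ℝ (Fin m),
      MemLp v 2 (volume.restrict (Icc (0:ℝ) T)) →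
      Tendsto (fun k => ∫ t in Icc (0:ℝ) T, inner ℝ (u k t) (v t) : ℕ → ℝ) atTop
        (nhds (∫ t in Icc (0:ℝ) T, inner ℝ (ubar t) (v t))))
    (x₀ : ℕ → EuclideanSpace ℝ (Fin n)) (xbar₀ : EuclideanSpace ℝ (Fin n))
    (hx₀ : Tendsto x₀ atTop (nhds xbar₀))
    (x : ℕ → ℝ → EuclideanSpace ℝ (Fin n)) (xhat : ℝ → EuclideanSpace ℝ (Fin n))
    (htraj : ∀ k, ∀ t ∈ Icc (0:ℝ) T,
      x k t = x₀ k + ∫ s in (0:ℝ)..t, (f₁ (x k s) + f₂ (x k s) (u k s)))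
    (hunif : TendstoUniformlyOn x xhat atTop (Icc (0:ℝ) T)) :
    ∀ t ∈ Icc (0:ℝ) T,
      xhat t = xbar₀ + ∫ s in (0:ℝ)..t, (f₁ (xhat s) + f₂ (xhat s) (ubar s)) := by
  intro t ht
  by_cases hb : IsBounded (xhat '' Icc 0 t)
  · exact limit_eq_of_isBounded hf₁ hf₂ hu hubar hweak htraj hx₀ hunif ht hb
  · rw [intervalIntegral.integral_undef (not_intervalIntegrable_limit_of_not_isBounded hf₁ hf₂ hu
      hubar hweak htraj hx₀ hunif ht hb), add_zero]
    exact limit_eq_initial_of_not_isBounded htraj hx₀ hunif ht hb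

/-- Closedness of control-affine trajectories under weak convergence of controls:
if `uₙ ⇀ ū` weakly in `L²`, `xₙ₀ → x̄₀`, and the trajectories `xₙ` of
`ẋ = f₁(x) + f₂(x)·uₙ` with `xₙ(0) = xₙ₀` converge uniformly to `x̂`, then `x̂` is the
trajectory of `ẋ = f₁(x) + f₂(x)·ū` with initial condition `x̄₀`. -/
theorem stmt_10 (n m : ℕ) (T : ℝ) (hT : 0 < T)
    (f₁ : EuclideanSpace ℝ (Fin n) → EuclideanSpace ℝ (Fin n))
    (f₂ : EuclideanSpace ℝ (Fin n) → (EuclideanSpace ℝ (Fin m) →L[ℝ] EuclideanSpace ℝ (Fin n)))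
    (hf₁ : Continuous f₁) (hf₂ : Continuous f₂)
    (u : ℕ → ℝ → EuclideanSpace ℝ (Fin m)) (ubar : ℝ → EuclideanSpace ℝ (Fin m))
    (hu : ∀ k, MemLp (u k) 2 (volume.restrict (Icc (0:ℝ) T)))
    (hubar : MemLp ubar 2 (volume.restrict (Icc (0:ℝ) T)))
    (hweak : ∀ v : ℝ → EuclideanSpace ℝ (Fin m),
      MemLp v 2 (volume.restrict (Icc (0:ℝ) T)) →
      Tendsto (fun k => ∫ t in Icc (0:ℝ) T, inner ℝ (u k t) (v t) : ℕ → ℝ) atTop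
        (nhds (∫ t in Icc (0:ℝ) T, inner ℝ (ubar t) (v t))))
    (x₀ : ℕ → EuclideanSpace ℝ (Fin n)) (xbar₀ : EuclideanSpace ℝ (Fin n))
    (hx₀ : Tendsto x₀ atTop (nhds xbar₀))
    (x : ℕ → ℝ → EuclideanSpace ℝ (Fin n)) (xhat : ℝ → EuclideanSpace ℝ (Fin n))
    (htraj : ∀ k, ∀ t ∈ Icc (0:ℝ) T,
      x k t = x₀ k + ∫ s in (0:ℝ)..t, (f₁ (x k s) + f₂ (x k s) (u k s)))
    (hunif : TendstoUniformlyOn x xhat atTop (Icc (0:ℝ) T)) :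
    ∀ t ∈ Icc (0:ℝ) T,
      xhat t = xbar₀ + ∫ s in (0:ℝ)..t, (f₁ (xhat s) + f₂ (xhat s) (ubar s)) :=
  stmt_10_general n m T f₁ f₂ hf₁ hf₂ u ubar hu hubar hweak x₀ xbar₀ hx₀ x xhat htraj hunif
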